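/- Let Z = [[z₁,z₂,z₃],[z₂,z₄,z₅],[z₃,z₅,z₆]] be an arbitrary complex symmetric 3×3 matrix and let Ω(Z) ∈ ℂ¹⁴ be the vector (√2·z₆, √2·(z₁z₆ - z₃²), √2·(z₅² - z₄z₆), -√2·(z₆z₂² - 2z₃z₅z₂ + z₃²z₄ + z₁(z₅² - z₄z₆)), 2z₂z₃ - 2z₁z₅, 2z₃z₄ - 2z₂z₅, 2z₃z₅ - 2z₂z₆, √2·(z₁z₄ - z₂²), -√2·z₄, √2·z₁, √2, -2z₅, 2z₃, -2z₂). Then Ω(Z)ᵀ · C₁₄ · conj(Ω(Z)) = 2·det(Z - conj(Z)), where conj denotes entrywise complex conjugation. (Equivalently, the Kähler potential of the special Kähler manifold Sp(6,ℝ)/(SU(3)×U(1)) in the special coordinates z₁,…,z₆ is K = -log(i·Ω(Z)ᵀC₁₄ conj(Ω(Z))) = -log(2i·det(Z - Z̄)).) -/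

import Mathlib

noncomputable section

open Matrix

/-- The holomorphic symplectic section (in the `14'`-representation of `Sp(6,ℝ)`) of
the special Kähler manifold `Sp(6,ℝ)/(SU(3)×U(1))`, as a function of the entries
`z₁,…,z₆` of the complex symmetric matrix `Z`. -/
def Omega14 (z1 z2 z3 z4 z5 z6 : ℂ) : Fin 14 → ℂ :=
  let s2 : ℂ := (Real.sqrt 2 : ℝ)
  ![s2 * z6,
    s2 * (z1*z6 - z3^2),
    s2 * (z5^2 - z4*z6),
    -(s2 * (z6*z2^2 - 2*z3*z5*z2 + z3^2*z4 + z1*(z5^2 - z4*z6))),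
    2*z2*z3 - 2*z1*z5,
    2*z3*z4 - 2*z2*z5,
    2*z3*z5 - 2*z2*z6,
    s2 * (z1*z4 - z2^2),
    -(s2 * z4),
    s2 * z1,
    s2,
    -(2*z5),
    2*z3,
    -(2*z2)]

/-- The standard symplectic form of `Sp(14,ℝ)`, with 7×7 block form `[[0,1₇],[-1₇,0]]`. -/
def C14 : Matrix (Fin 14) (Fin 14) ℂ :=
  Matrix.of fun i j =>
    if (i : ℕ) + 7 = (j : ℕ) then 1 else if (j : ℕ) + 7 = (i : ℕ) then -1 else 0

/-! Ω has real coefficients, so `conj Ω(Z) = Ω(conj Z)`, and the claim is the case `W = conj Z` of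
the polynomial identity `Ω(Z)ᵀ C₁₄ Ω(W) = 2 det(Z - W)`, valid for independent symmetric `Z`, `W`. -/

theorem C14_mulVec_apply_castAdd (v : Fin 14 → ℂ) (i : Fin 7) :
    (C14 *ᵥ v) (Fin.castAdd 7 i) = v (Fin.natAdd 7 i) := by
  fin_cases i <;> simp [C14, mulVec, dotProduct, Fin.sum_univ_succ]

theorem C14_mulVec_apply_natAdd (v : Fin 14 → ℂ) (i : Fin 7) :
    (C14 *ᵥ v) (Fin.natAdd 7 i) = -v (Fin.castAdd 7 i) := by
  fin_cases i <;> simp [C14, mulVec, dotProduct, Fin.sum_univ_succ]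

theorem dotProduct_C14_mulVec (u v : Fin 14 → ℂ) :
    u ⬝ᵥ C14 *ᵥ v = ∑ i : Fin 7,
      (u (Fin.castAdd 7 i) * v (Fin.natAdd 7 i) - u (Fin.natAdd 7 i) * v (Fin.castAdd 7 i)) := by
  rw [dotProduct, Fin.sum_univ_add (a := 7) (b := 7), ← Finset.sum_add_distrib]
  refine Finset.sum_congr rfl fun i _ => ?_
  rw [C14_mulVec_apply_castAdd, C14_mulVec_apply_natAdd]
  ring

theorem conj_Omega14 (z1 z2 z3 z4 z5 z6 : ℂ) :
    (fun j => starRingEnd ℂ (Omega14 z1 z2 z3 z4 z5 z6 j)) =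
      Omega14 (starRingEnd ℂ z1) (starRingEnd ℂ z2) (starRingEnd ℂ z3)
        (starRingEnd ℂ z4) (starRingEnd ℂ z5) (starRingEnd ℂ z6) := by
  ext j
  fin_cases j <;> simp [Omega14, map_ofNat]

theorem Omega14_dotProduct_C14_mulVec_Omega14 (z1 z2 z3 z4 z5 z6 w1 w2 w3 w4 w5 w6 : ℂ) :
    Omega14 z1 z2 z3 z4 z5 z6 ⬝ᵥ C14 *ᵥ Omega14 w1 w2 w3 w4 w5 w6 =
      2 * (!![z1, z2, z3; z2, z4, z5; z3, z5, z6] - !![w1, w2, w3; w2, w4, w5; w3, w5, w6]).det := by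
  have hs : ((Real.sqrt 2 : ℝ) : ℂ) ^ 2 = 2 := by
    rw [← Complex.ofReal_pow, Real.sq_sqrt zero_le_two]
    norm_num
  rw [dotProduct_C14_mulVec, Fin.sum_univ_seven, det_fin_three]
  simp only [Omega14, Fin.isValue, Fin.reduceCastAdd, Fin.natAdd_eq_addNat, Fin.reduceAddNat,
    cons_val_zero, cons_val_one, cons_val, Matrix.sub_apply, of_apply, cons_val', cons_val_fin_one]
  ring_nf
  rw [hs]
  ring

/-- `Ω(Z)ᵀ · C₁₄ · conj(Ω(Z)) = 2·det(Z - conj Z)` for any complex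
symmetric 3×3 matrix `Z`. -/
theorem stmt_10 (z1 z2 z3 z4 z5 z6 : ℂ) :
    let Z : Matrix (Fin 3) (Fin 3) ℂ := !![z1, z2, z3; z2, z4, z5; z3, z5, z6]
    dotProduct (Omega14 z1 z2 z3 z4 z5 z6)
        (C14.mulVec fun j => starRingEnd ℂ (Omega14 z1 z2 z3 z4 z5 z6 j)) =
      2 * (Z - Z.map (starRingEnd ℂ)).det := by
  intro Z
  rw [conj_Omega14, Omega14_dotProduct_C14_mulVec_Omega14]
  congr 2
  ext i j
  fin_cases i <;> fin_cases j <;> rfl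

end
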